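/- arXiv:2510.15277 — 7 statements merged into one kernel-verified Lean document; each statement's English description precedes it below -/
import Mathlib

section
/- For a function h : [0,a] → ℝ with h' absolutely continuous, suppose ‖h'' + q·h‖_{L∞[0,a]} ≤ 1 (with q ∈ ℝ any constant giving one of the three operator types) and h(a) = h'(a) = 0, where 0 < a < δ. Then |h(0)| ≤ G(a), where G is the antiderivative (vanishing with its derivative at 0) of the Green's function kernel g of the operator, and this bound is attained. -/
open MeasureTheory

lemma my_swap (a : ℝ) (ha : 0 ≤ a) (c f : ℝ → ℝ) (hc : Continuous c)
    (hf : IntervalIntegrable f volume 0 a) :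
    ∫ t in (0:ℝ)..a, (∫ s in (0:ℝ)..t, c s) * f t
      = ∫ s in (0:ℝ)..a, c s * ∫ t in s..a, f t := by
  have hfI : IntegrableOn f (Set.Ioc 0 a) := by
    rwa [intervalIntegrable_iff_integrableOn_Ioc_of_le ha] at hf
  set μ := volume.restrict (Set.Ioc (0:ℝ) a) with hμ
  have hcI : IntegrableOn c (Set.Ioc 0 a) := hc.integrableOn_Ioc
  set K : ℝ → ℝ → ℝ := fun t s => Set.indicator (Set.Ioc 0 t) c s * f t with hK
  have hE : MeasurableSet {p : ℝ × ℝ | p.2 ∈ Set.Ioc 0 p.1} := by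
    apply MeasurableSet.inter
    · exact measurableSet_lt measurable_const measurable_snd
    · exact measurableSet_le measurable_snd measurable_fst
  have hKeq : Function.uncurry K =
      fun p : ℝ × ℝ => Set.indicator {p : ℝ × ℝ | p.2 ∈ Set.Ioc 0 p.1} (fun q => c q.2) p * f p.1 := by
    funext p
    simp only [Function.uncurry, hK, Set.indicator_apply, Set.mem_setOf_eq]
  have hKint : Integrable (Function.uncurry K) (μ.prod μ) := by
    rw [hKeq]
    have hmeas : AEStronglyMeasurable
        (fun p : ℝ × ℝ => Set.indicator {p : ℝ × ℝ | p.2 ∈ Set.Ioc 0 p.1} (fun q => c q.2) p * f p.1)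
        (μ.prod μ) := by
      apply AEStronglyMeasurable.mul
      · exact AEStronglyMeasurable.indicator (hc.comp continuous_snd).aestronglyMeasurable hE
      · exact hfI.aestronglyMeasurable.comp_quasiMeasurePreserving
          Measure.quasiMeasurePreserving_fst
    refine Integrable.mono' (hfI.norm.mul_prod hcI.norm) hmeas ?_
    filter_upwards with p
    rw [Real.norm_eq_abs, abs_mul, mul_comm]
    have h1 : |Set.indicator {p : ℝ × ℝ | p.2 ∈ Set.Ioc 0 p.1} (fun q => c q.2) p| ≤ ‖c p.2‖ :=
      norm_indicator_le_norm_self (fun q : ℝ × ℝ => c q.2) p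
    exact mul_le_mul (le_refl ‖f p.1‖) h1 (abs_nonneg _) (norm_nonneg _)
  have hswap := integral_integral_swap hKint
  have hL : (∫ t, ∫ s, K t s ∂μ ∂μ) = ∫ t in (0:ℝ)..a, (∫ s in (0:ℝ)..t, c s) * f t := by
    rw [intervalIntegral.integral_of_le ha, hμ]
    apply setIntegral_congr_fun measurableSet_Ioc
    intro t ht
    simp only [hK]
    have hset : Set.Ioc (0:ℝ) a ∩ Set.Ioc 0 t = Set.Ioc 0 t := by
      rw [Set.Ioc_inter_Ioc]
      simp [min_eq_right ht.2]
    rw [integral_mul_const, setIntegral_indicator measurableSet_Ioc, hset,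
      intervalIntegral.integral_of_le ht.1.le]
  have hR : (∫ s, ∫ t, K t s ∂μ ∂μ) = ∫ s in (0:ℝ)..a, c s * ∫ t in s..a, f t := by
    rw [intervalIntegral.integral_of_le ha, hμ]
    apply setIntegral_congr_fun measurableSet_Ioc
    intro s hs
    have hind : ∀ t, K t s = Set.indicator (Set.Ici s) (fun t => c s * f t) t := by
      intro t
      by_cases h : s ≤ t
      · have h1 : s ∈ Set.Ioc 0 t := ⟨hs.1, h⟩
        have h2 : t ∈ Set.Ici s := h
        simp [hK, Set.indicator_of_mem h1, Set.indicator_of_mem h2]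
      · have h1 : s ∉ Set.Ioc 0 t := fun hh => h hh.2
        have h2 : t ∉ Set.Ici s := h
        simp [hK, Set.indicator_of_notMem h1, Set.indicator_of_notMem h2]
    calc (∫ t, K t s ∂μ) = ∫ t, Set.indicator (Set.Ici s) (fun t => c s * f t) t ∂μ := by
          exact integral_congr_ae (Filter.Eventually.of_forall fun t => hind t)
    _ = ∫ t in Set.Ici s, c s * f t ∂μ := integral_indicator measurableSet_Ici
    _ = ∫ t in Set.Icc s a, c s * f t := by
          rw [hμ, Measure.restrict_restrict measurableSet_Ici]
          have : Set.Ici s ∩ Set.Ioc 0 a = Set.Icc s a := by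
            ext t
            simp only [Set.mem_inter_iff, Set.mem_Ioc, Set.mem_Ici, Set.mem_Icc]
            constructor
            · rintro ⟨h3, _, h2⟩; exact ⟨h3, h2⟩
            · rintro ⟨h1, h2⟩; exact ⟨h1, lt_of_lt_of_le hs.1 h1, h2⟩
          rw [this]
    _ = ∫ t in Set.Ioc s a, c s * f t := integral_Icc_eq_integral_Ioc
    _ = c s * ∫ t in s..a, f t := by
          rw [intervalIntegral.integral_of_le hs.2, integral_const_mul]
  rw [← hL, ← hR, hswap]


/-- `h ∈ W^{P(D)}_∞[0,a]` for `P(D) = D² + q`: `h'` is absolutely continuous on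
`[0,a]` (with a.e. second derivative `h2`) and `‖h'' + q·h‖_{L∞[0,a]} ≤ 1`. -/
def UniClass (q a : ℝ) (h : ℝ → ℝ) : Prop :=
  Differentiable ℝ h ∧
  ∃ h2 : ℝ → ℝ, IntervalIntegrable h2 volume 0 a ∧
    (∀ t ∈ Set.Icc 0 a, deriv h t = deriv h 0 + ∫ s in (0 : ℝ)..t, h2 s) ∧
    (∀ᵐ t ∂(volume.restrict (Set.Icc 0 a)), |h2 t + q * h t| ≤ 1)

/-- For the operator `P(D) = D² + q` with Green's function kernel `g`
(so `g'' = -q·g`, `g 0 = 0`, `g' 0 = 1`, `g` strictly increasing on `[0,δ)`) and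
antiderivative `G` of `g` vanishing at `0`, every `h ∈ W^{P(D)}_∞[0,a]` with
`h(a) = h'(a) = 0` satisfies `|h 0| ≤ G a`, and the bound is attained. -/
theorem stmt_4 (q δ a : ℝ) (g G : ℝ → ℝ)
    (hg2 : ContDiff ℝ 2 g) (hode : ∀ t, deriv (deriv g) t = -q * g t)
    (hg0 : g 0 = 0) (hg0' : deriv g 0 = 1)
    (hmono : StrictMonoOn g (Set.Ico 0 δ))
    (hG : ∀ t, G t = ∫ s in (0 : ℝ)..t, g s)
    (ha : 0 < a) (haδ : a < δ) :
    (∀ h : ℝ → ℝ, UniClass q a h → h a = 0 → deriv h a = 0 → |h 0| ≤ G a) ∧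
    (∃ h : ℝ → ℝ, UniClass q a h ∧ h a = 0 ∧ deriv h a = 0 ∧ |h 0| = G a) := by
  have ha' : (0:ℝ) ≤ a := ha.le
  have hgc : Continuous g := hg2.continuous
  have hgdiff : Differentiable ℝ g := hg2.differentiable two_ne_zero
  have hdg : ContDiff ℝ 1 (deriv g) := by
    have h2 : ContDiff ℝ (1+1) g := by norm_num; exact hg2
    exact (contDiff_succ_iff_deriv.mp h2).2.2
  have hdgdiff : Differentiable ℝ (deriv g) := hdg.differentiable one_ne_zero
  have hdgc : Continuous (deriv g) := hdg.continuous
  have hddgc : Continuous (deriv (deriv g)) := by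
    rw [show deriv (deriv g) = fun t => -q * g t from funext hode]
    fun_prop
  have hgnn : ∀ t ∈ Set.Icc (0:ℝ) a, 0 ≤ g t := by
    rintro t ⟨ht0, hta⟩
    rcases eq_or_lt_of_le ht0 with rfl | h0t
    · rw [hg0]
    · have := hmono ⟨le_rfl, ha.trans haδ⟩ ⟨ht0, lt_of_le_of_lt hta haδ⟩ h0t
      rw [hg0] at this
      exact this.le
  have hgeq : ∀ t, g t = ∫ s in (0:ℝ)..t, deriv g s := by
    intro t
    rw [intervalIntegral.integral_deriv_eq_sub (fun x _ => hgdiff x)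
      (hdgc.intervalIntegrable _ _), hg0, sub_zero]
  have hGderiv : ∀ t, HasDerivAt G (g t) t := by
    intro t
    have h1 : HasDerivAt (fun u => ∫ x in (0:ℝ)..u, g x) (g t) t :=
      intervalIntegral.integral_hasDerivAt_right (hgc.intervalIntegrable _ _)
        (hgc.stronglyMeasurableAtFilter _ _) hgc.continuousAt
    rwa [show G = fun u => ∫ x in (0:ℝ)..u, g x from funext hG]
  have hG0 : G 0 = 0 := by rw [hG 0, intervalIntegral.integral_same]
  have hK1 : ∀ s, deriv g s + q * G s = 1 := by
    intro s
    have hKd : ∀ s, HasDerivAt (fun s => deriv g s + q * G s)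
        (deriv (deriv g) s + q * g s) s := fun s =>
      ((hdgdiff s).hasDerivAt).add ((hGderiv s).const_mul q)
    have hK0 : ∀ s, deriv (fun s => deriv g s + q * G s) s = 0 := by
      intro s
      rw [(hKd s).deriv, hode]
      ring
    have hconst := is_const_of_deriv_eq_zero (fun s => (hKd s).differentiableAt) hK0 s 0
    simpa [hg0', hG0] using hconst
  constructor
  · -- the bound
    rintro h ⟨hdiff, h2, hint, hrep, hbd⟩ hA hA'
    set u0 := deriv h 0 with hu0
    set v : ℝ → ℝ := fun t => ∫ s in (0:ℝ)..t, h2 s with hv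
    have hvcont : ContinuousOn v (Set.Icc 0 a) := by
      have := intervalIntegral.continuousOn_primitive_interval' hint
        (Set.left_mem_uIcc (a := (0:ℝ)) (b := a))
      rwa [Set.uIcc_of_le ha'] at this
    have hva : v a = -u0 := by
      have h1 := hrep a ⟨ha', le_rfl⟩
      rw [hA'] at h1
      simp only [hv]
      linarith
    have hsub : ∀ s ∈ Set.Icc (0:ℝ) a, (∫ t in s..a, h2 t) = -(deriv h s) := by
      intro s hs
      have h1 : IntervalIntegrable h2 volume 0 s := hint.mono_set (by
        rw [Set.uIcc_of_le hs.1, Set.uIcc_of_le ha']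
        exact Set.Icc_subset_Icc le_rfl hs.2)
      have h2' : IntervalIntegrable h2 volume s a := hint.mono_set (by
        rw [Set.uIcc_of_le hs.2, Set.uIcc_of_le ha']
        exact Set.Icc_subset_Icc hs.1 le_rfl)
      have hadd := intervalIntegral.integral_add_adjacent_intervals h1 h2'
      have hvs := hrep s hs
      have hvaa : v a = -u0 := hva
      simp only [hv] at hvaa hadd ⊢
      linarith
    have hvint : IntervalIntegrable (deriv h) volume 0 a := by
      rw [intervalIntegrable_iff_integrableOn_Ioc_of_le ha']
      have h1 : IntegrableOn (fun s => u0 + v s) (Set.Ioc 0 a) :=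
        ((continuousOn_const.add hvcont).integrableOn_Icc).mono_set Set.Ioc_subset_Icc_self
      exact h1.congr_fun (fun s hs => (hrep s (Set.Ioc_subset_Icc_self hs)).symm) measurableSet_Ioc
    have hv'int : IntervalIntegrable (fun x => deriv g x * deriv h x) volume 0 a :=
      hvint.continuousOn_mul hdgc.continuousOn
    have hAint : IntervalIntegrable (fun x => deriv (deriv g) x * h x) volume 0 a :=
      (hddgc.mul hdiff.continuous).intervalIntegrable _ _
    have hparts : (∫ x in (0:ℝ)..a, (deriv (deriv g) x * h x + deriv g x * deriv h x))
        = - h 0 := by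
      rw [intervalIntegral.integral_deriv_mul_eq_sub (u := deriv g) (v := h)
        (fun x _ => (hdgdiff x).hasDerivAt) (fun x _ => (hdiff x).hasDerivAt)
        (hddgc.intervalIntegrable _ _) hvint, hA, hg0']
      ring
    have key1 : (∫ t in (0:ℝ)..a, g t * h2 t)
        = ∫ s in (0:ℝ)..a, deriv g s * ∫ t in s..a, h2 t := by
      have hs := my_swap a ha' (deriv g) h2 hdgc hint
      calc (∫ t in (0:ℝ)..a, g t * h2 t)
          = ∫ t in (0:ℝ)..a, (∫ s in (0:ℝ)..t, deriv g s) * h2 t := by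
            apply intervalIntegral.integral_congr
            intro t _
            show g t * h2 t = (∫ s in (0:ℝ)..t, deriv g s) * h2 t
            rw [← hgeq t]
      _ = _ := hs
    have key2 : (∫ s in (0:ℝ)..a, deriv g s * ∫ t in s..a, h2 t)
        = ∫ s in (0:ℝ)..a, deriv g s * (-(deriv h s)) := by
      apply intervalIntegral.integral_congr
      intro s hs
      show deriv g s * (∫ t in s..a, h2 t) = deriv g s * (-(deriv h s))
      rw [hsub s (by rwa [Set.uIcc_of_le ha'] at hs)]
    have hA2 : (∫ x in (0:ℝ)..a, deriv (deriv g) x * h x)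
        = -q * ∫ t in (0:ℝ)..a, g t * h t := by
      calc (∫ x in (0:ℝ)..a, deriv (deriv g) x * h x)
          = ∫ x in (0:ℝ)..a, -q * (g x * h x) := by
            apply intervalIntegral.integral_congr
            intro x _
            show deriv (deriv g) x * h x = -q * (g x * h x)
            rw [hode]
            ring
      _ = -q * ∫ t in (0:ℝ)..a, g t * h t := intervalIntegral.integral_const_mul _ _
    have hsum := intervalIntegral.integral_add hAint hv'int
    rw [hparts] at hsum
    have key3 : (∫ t in (0:ℝ)..a, g t * h2 t)
        = h 0 - q * ∫ t in (0:ℝ)..a, g t * h t := by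
      have hneg : (∫ s in (0:ℝ)..a, deriv g s * (-(deriv h s)))
          = -∫ s in (0:ℝ)..a, deriv g s * deriv h s := by
        simp [mul_neg, intervalIntegral.integral_neg]
      rw [key1, key2, hneg]
      have := hA2
      linarith
    have hφint : IntervalIntegrable (fun t => h2 t + q * h t) volume 0 a :=
      hint.add ((continuous_const.mul hdiff.continuous).intervalIntegrable _ _)
    have hgφint : IntervalIntegrable (fun t => g t * (h2 t + q * h t)) volume 0 a :=
      hφint.continuousOn_mul hgc.continuousOn
    have hrepr : h 0 = ∫ t in (0:ℝ)..a, g t * (h2 t + q * h t) := by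
      have hsplit : (∫ t in (0:ℝ)..a, g t * (h2 t + q * h t))
          = (∫ t in (0:ℝ)..a, g t * h2 t) + q * ∫ t in (0:ℝ)..a, g t * h t := by
        have h1 : (∫ t in (0:ℝ)..a, g t * (h2 t + q * h t))
            = ∫ t in (0:ℝ)..a, (g t * h2 t + q * (g t * h t)) := by
          apply intervalIntegral.integral_congr
          intro t _
          ring
        rw [h1, intervalIntegral.integral_add (g := fun t => q * (g t * h t)) (hint.continuousOn_mul hgc.continuousOn)
          (((continuous_const.mul (hgc.mul hdiff.continuous))).intervalIntegrable _ _),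
          intervalIntegral.integral_const_mul]
      rw [hsplit, key3]
      ring
    have hbd' : ∀ᵐ t ∂(volume.restrict (Set.Ioc 0 a)), |h2 t + q * h t| ≤ 1 :=
      hbd.filter_mono (ae_mono (Measure.restrict_mono Set.Ioc_subset_Icc_self le_rfl))
    rw [hrepr, hG a, intervalIntegral.integral_of_le ha', intervalIntegral.integral_of_le ha']
    have h1 : |∫ t in Set.Ioc (0:ℝ) a, g t * (h2 t + q * h t)|
        ≤ ∫ t in Set.Ioc (0:ℝ) a, |g t * (h2 t + q * h t)| := by
      rw [← Real.norm_eq_abs]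
      exact (norm_integral_le_integral_norm _)
    refine le_trans h1 (integral_mono_ae ?_ ?_ ?_)
    · have := hgφint
      rw [intervalIntegrable_iff_integrableOn_Ioc_of_le ha'] at this
      exact this.abs
    · exact (hgc.intervalIntegrable 0 a).1
    · filter_upwards [hbd', ae_restrict_mem measurableSet_Ioc] with t hb1 hb2
      have hgt : 0 ≤ g t := hgnn t (Set.Ioc_subset_Icc_self hb2)
      rw [abs_mul, abs_of_nonneg hgt]
      calc g t * |h2 t + q * h t| ≤ g t * 1 := mul_le_mul_of_nonneg_left hb1 hgt
      _ = g t := mul_one _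
  · -- the extremal function
    have hh : ∀ t, HasDerivAt (fun t => G (a - t)) (-g (a - t)) t := by
      intro t
      have h1 : HasDerivAt (fun x : ℝ => a - x) (-1) t := (hasDerivAt_id t).const_sub a
      have h2 := (hGderiv (a - t)).comp t h1
      simpa [Function.comp_def] using h2
    have hd : ∀ t, deriv (fun t => G (a - t)) t = -g (a - t) := fun t => (hh t).deriv
    have hGnn : 0 ≤ G a := by
      rw [hG a]
      exact intervalIntegral.integral_nonneg ha' (fun u hu => hgnn u hu)
    refine ⟨fun t => G (a - t), ⟨fun t => (hh t).differentiableAt,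
      fun t => deriv g (a - t), ?_, ?_, ?_⟩, ?_, ?_, ?_⟩
    · exact (hdgc.comp (continuous_const.sub continuous_id)).intervalIntegrable _ _
    · intro t _
      rw [hd, hd 0, intervalIntegral.integral_comp_sub_left (fun s => deriv g s) a,
        intervalIntegral.integral_deriv_eq_sub (fun x _ => hgdiff x)
          (hdgc.intervalIntegrable _ _)]
      simp only [sub_zero]
      ring
    · filter_upwards with t
      have := hK1 (a - t)
      rw [this]
      norm_num
    · show G (a - a) = 0
      simp [hG0]
    · rw [hd a]
      simp [hg0]
    · show |G (a - 0)| = G a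
      rw [sub_zero, abs_of_nonneg hGnn]
end

section
/- The quantity F(a) := G(a) - 2G(g^{-1}(g(a)/2)) is increasing in a on (0, δ). -/
open Set Filter Real Topology

set_option maxHeartbeats 1000000 in
/-- For the Green's function kernel `g` of `P(D) = D² + pD + q` (satisfying the
adjoint equation `g'' = p·g' - q·g`, `g 0 = 0`, `g' 0 = 1`, strictly increasing
on `[0,δ)` with inverse `ginv` there), the quantity
`F(a) = G a - 2·G (g⁻¹(g(a)/2))` is increasing in `a` on `(0, δ)`,
where `G` is the antiderivative of `g` with `G 0 = 0`. -/
theorem stmt_6 (p q δ : ℝ) (g G ginv : ℝ → ℝ)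
    (hg2 : ContDiff ℝ 2 g) (hode : ∀ t, deriv (deriv g) t = p * deriv g t - q * g t)
    (hg0 : g 0 = 0) (hg0' : deriv g 0 = 1)
    (hδ : 0 < δ) (hmono : StrictMonoOn g (Set.Ico 0 δ))
    (hG : ∀ t, G t = ∫ s in (0 : ℝ)..t, g s)
    (hginv : ∀ t ∈ Set.Ico 0 δ, ginv (g t) = t)
    (hhalf : ∀ a ∈ Set.Ioo 0 δ, ∃ t ∈ Set.Ioo 0 a, g t = g a / 2) :
    MonotoneOn (fun a => G a - 2 * G (ginv (g a / 2))) (Set.Ioo 0 δ) := by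
  -- regularity consequences
  have h2 : ContDiff ℝ (1 + 1) g := by
    have h : ((1 : WithTop ℕ∞) + 1) = 2 := by norm_num
    rwa [h]
  have hdg : Differentiable ℝ g := (contDiff_succ_iff_deriv.1 h2).1
  have hcd1 : ContDiff ℝ 1 (deriv g) := (contDiff_succ_iff_deriv.1 h2).2.2
  have hdg' : Differentiable ℝ (deriv g) := (contDiff_one_iff_deriv.1 hcd1).1
  have hg'c : Continuous (deriv g) := hcd1.continuous
  have hg''c : Continuous (deriv (deriv g)) := (contDiff_one_iff_deriv.1 hcd1).2
  have hgc : Continuous g := hdg.continuous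
  have hgd : ∀ x : ℝ, HasDerivAt g (deriv g x) x := fun x => (hdg x).hasDerivAt
  have hg'd : ∀ x : ℝ, HasDerivAt (deriv g) (deriv (deriv g) x) x := fun x => (hdg' x).hasDerivAt
  -- g positive on (0, δ)
  have hgpos : ∀ x ∈ Set.Ioo 0 δ, 0 < g x := by
    intro x hx
    have h := hmono (Set.mem_Ico.2 ⟨le_refl 0, hδ⟩) ⟨hx.1.le, hx.2⟩ hx.1
    rwa [hg0] at h
  -- deriv g nonneg on (0, δ)
  have hd_nonneg : ∀ x ∈ Set.Ioo 0 δ, 0 ≤ deriv g x := by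
    intro x hx
    have hslope := hasDerivAt_iff_tendsto_slope.1 (hgd x)
    have hsub : (𝓝[>] x) ≤ (𝓝[≠] x) :=
      nhdsWithin_mono x fun y hy => ne_of_gt hy
    refine ge_of_tendsto (hslope.mono_left hsub) ?_
    filter_upwards [Ioo_mem_nhdsGT_of_mem (⟨le_refl x, hx.2⟩ : x ∈ Set.Ico x δ)] with y hy
    rw [slope_def_field]
    apply div_nonneg _ (by linarith [hy.1])
    have h : g x ≤ g y := (hmono ⟨hx.1.le, hx.2⟩ ⟨(hx.1.trans hy.1).le, hy.2⟩ hy.1).le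
    linarith
  -- deriv g positive on [0, δ)
  have hd_pos : ∀ x ∈ Set.Ico 0 δ, 0 < deriv g x := by
    intro x hx
    rcases eq_or_lt_of_le hx.1 with h0 | h0
    · rw [← h0, hg0']; norm_num
    · by_contra hle
      have hzero : deriv g x = 0 := le_antisymm (not_lt.1 hle) (hd_nonneg x ⟨h0, hx.2⟩)
      have hmin : IsLocalMin (deriv g) x := by
        filter_upwards [Ioo_mem_nhds h0 hx.2] with y hy
        rw [hzero]; exact hd_nonneg y hy
      have h2z := hmin.deriv_eq_zero
      rw [hode x, hzero, mul_zero, zero_sub, neg_eq_zero] at h2z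
      have hq : q = 0 := by
        have hx' := hgpos x ⟨h0, hx.2⟩
        rcases mul_eq_zero.1 h2z with h | h
        · exact h
        · exact absurd h (ne_of_gt hx')
      have hu : ∀ t : ℝ, HasDerivAt (fun t => deriv g t * Real.exp (-(p * t)))
          ((deriv (deriv g) t - p * deriv g t) * Real.exp (-(p * t))) t := by
        intro t
        have h1 : HasDerivAt (fun t : ℝ => -(p * t)) (-p) t := by
          simpa using ((hasDerivAt_id t).const_mul p).fun_neg
        have he : HasDerivAt (fun t => Real.exp (-(p * t))) (Real.exp (-(p * t)) * (-p)) t :=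
          h1.exp
        have h3 := (hg'd t).fun_mul he
        refine h3.congr_deriv ?_
        ring
      have hu0 : ∀ t : ℝ, deriv (fun t => deriv g t * Real.exp (-(p * t))) t = 0 := by
        intro t
        rw [(hu t).deriv, hode t, hq]
        ring
      have hconst := is_const_of_deriv_eq_zero (fun t => (hu t).differentiableAt) hu0 x 0
      simp only [hzero, hg0', zero_mul, mul_zero, one_mul] at hconst
      exact absurd hconst.symm (ne_of_gt (Real.exp_pos _))
  -- inverse function basics via IVT
  have hiv : ∀ a b : ℝ, 0 ≤ a → a ≤ b → b < δ → ∀ y ∈ Set.Ioo (g a) (g b),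
      ginv y ∈ Set.Ioo a b ∧ g (ginv y) = y := by
    intro a b ha hab hb y hy
    obtain ⟨x, hx, hgx⟩ := intermediate_value_Ioo hab hgc.continuousOn hy
    have hxI : x ∈ Set.Ico 0 δ := ⟨ha.trans hx.1.le, hx.2.trans hb⟩
    have hxg : ginv y = x := by rw [← hgx, hginv x hxI]
    rw [hxg]
    exact ⟨hx, hgx⟩
  -- continuity of ginv at g t
  have hcont : ∀ t ∈ Set.Ioo 0 δ, ContinuousAt ginv (g t) := by
    intro t ht
    have hgt : ginv (g t) = t := hginv t ⟨ht.1.le, ht.2⟩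
    rw [ContinuousAt, hgt, tendsto_order]
    constructor
    · intro l hl
      have ha0 : (0:ℝ) ≤ max l 0 := le_max_right l 0
      have hat : max l 0 < t := max_lt hl ht.1
      have htb : t < (t + δ) / 2 := by linarith [ht.2]
      have hbδ : (t + δ) / 2 < δ := by linarith [ht.2]
      have hmem : Set.Ioo (g (max l 0)) (g ((t + δ) / 2)) ∈ 𝓝 (g t) :=
        Ioo_mem_nhds (hmono ⟨ha0, hat.trans ht.2⟩ ⟨ht.1.le, ht.2⟩ hat)
          (hmono ⟨ht.1.le, ht.2⟩ ⟨(ht.1.trans htb).le, hbδ⟩ htb)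
      filter_upwards [hmem] with y hy
      exact lt_of_le_of_lt (le_max_left l 0)
        ((hiv _ _ ha0 (hat.le.trans htb.le) hbδ y hy).1.1)
    · intro u hu
      have htb : t < min u ((t + δ) / 2) := lt_min hu (by linarith [ht.2])
      have hbδ : min u ((t + δ) / 2) < δ :=
        lt_of_le_of_lt (min_le_right _ _) (by linarith [ht.2])
      have hmem : Set.Ioo (g 0) (g (min u ((t + δ) / 2))) ∈ 𝓝 (g t) :=
        Ioo_mem_nhds (by rw [hg0]; exact hgpos t ht)
          (hmono ⟨ht.1.le, ht.2⟩ ⟨(ht.1.trans htb).le, hbδ⟩ htb)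
      filter_upwards [hmem] with y hy
      exact lt_of_lt_of_le ((hiv 0 _ le_rfl (ht.1.trans htb).le hbδ y hy).1.2) (min_le_left _ _)
  -- derivative of ginv
  have hkey : ∀ t ∈ Set.Ioo 0 δ, HasDerivAt ginv (deriv g t)⁻¹ (g t) := by
    intro t ht
    have hgt : ginv (g t) = t := hginv t ⟨ht.1.le, ht.2⟩
    have h1 : (0:ℝ) ≤ t / 2 := by linarith [ht.1]
    have h2 : t / 2 ≤ (t + δ) / 2 := by linarith [ht.2]
    have h3 : (t + δ) / 2 < δ := by linarith [ht.2]
    have hfg : ∀ᶠ y in 𝓝 (g t), g (ginv y) = y := by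
      have hmem : Set.Ioo (g (t / 2)) (g ((t + δ) / 2)) ∈ 𝓝 (g t) :=
        Ioo_mem_nhds
          (hmono ⟨h1, by linarith [ht.1, ht.2]⟩ ⟨ht.1.le, ht.2⟩ (by linarith [ht.1]))
          (hmono ⟨ht.1.le, ht.2⟩ ⟨by linarith [ht.1, ht.2], h3⟩ (by linarith [ht.2]))
      filter_upwards [hmem] with y hy
      exact (hiv _ _ h1 h2 h3 y hy).2
    have hf : HasDerivAt g (deriv g t) (ginv (g t)) := by rw [hgt]; exact hgd t
    exact HasDerivAt.of_local_left_inverse (hcont t ht) hf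
      (ne_of_gt (hd_pos t ⟨ht.1.le, ht.2⟩)) hfg
  -- the midpoint function τ s = ginv (g s / 2)
  have hτs : ∀ s ∈ Set.Ioo 0 δ,
      ginv (g s / 2) ∈ Set.Ioo 0 s ∧ g (ginv (g s / 2)) = g s / 2 := by
    intro s hs
    obtain ⟨t, ht, hgt⟩ := hhalf s hs
    have h : ginv (g s / 2) = t := by rw [← hgt, hginv t ⟨ht.1.le, ht.2.trans hs.2⟩]
    rw [h, hgt]
    exact ⟨ht, rfl⟩
  have hτδ : ∀ s ∈ Set.Ioo 0 δ, ginv (g s / 2) ∈ Set.Ioo 0 δ := fun s hs =>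
    ⟨(hτs s hs).1.1, (hτs s hs).1.2.trans hs.2⟩
  have hτ0 : ginv (g 0 / 2) = 0 := by
    have h : g 0 / 2 = g 0 := by rw [hg0]; norm_num
    rw [h, hginv 0 ⟨le_rfl, hδ⟩]
  have hτd : ∀ s ∈ Set.Ioo 0 δ, HasDerivAt (fun s => ginv (g s / 2))
      ((deriv g (ginv (g s / 2)))⁻¹ * (deriv g s / 2)) s := by
    intro s hs
    have h1 : HasDerivAt (fun s => g s / 2) (deriv g s / 2) s := (hgd s).div_const 2
    have h2 := hkey _ (hτδ s hs)
    rw [(hτs s hs).2] at h2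
    exact h2.comp s h1
  -- D s = 2 g'(τ s) - g'(s) and M s
  set D : ℝ → ℝ := fun s => 2 * deriv g (ginv (g s / 2)) - deriv g s with hDdef
  set M : ℝ → ℝ := fun s => q * g s / (2 * deriv g (ginv (g s / 2))) with hMdef
  have hg'τpos : ∀ s ∈ Set.Ioo 0 δ, 0 < deriv g (ginv (g s / 2)) := fun s hs =>
    hd_pos _ ⟨(hτδ s hs).1.le, (hτδ s hs).2⟩
  have hDd : ∀ s ∈ Set.Ioo 0 δ, HasDerivAt D (M s * D s) s := by
    intro s hs
    have hτval := (hτs s hs).2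
    have hg'τ : 0 < deriv g (ginv (g s / 2)) := hg'τpos s hs
    have h1 : HasDerivAt (fun s => deriv g (ginv (g s / 2)))
        (deriv (deriv g) (ginv (g s / 2)) * ((deriv g (ginv (g s / 2)))⁻¹ * (deriv g s / 2))) s :=
      (hg'd _).comp s (hτd s hs)
    have h2 := (h1.const_mul 2).fun_sub (hg'd s)
    refine h2.congr_deriv ?_
    simp only [hMdef, hDdef]
    rw [hode, hode, hτval]
    field_simp
    ring
  have hD0 : D 0 = 1 := by
    simp only [hDdef, hτ0, hg0']
    norm_num
  -- continuity of τ, D, M on closed subintervals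
  have hτcont : ∀ s1 ∈ Set.Ioo 0 δ, ContinuousOn (fun s => ginv (g s / 2)) (Set.Icc 0 s1) := by
    intro s1 hs1 x hx
    rcases eq_or_lt_of_le hx.1 with h0 | h0
    · obtain rfl : (0:ℝ) = x := h0
      rw [ContinuousWithinAt, hτ0]
      apply tendsto_of_tendsto_of_tendsto_of_le_of_le' tendsto_const_nhds
        (tendsto_id.mono_left nhdsWithin_le_nhds)
      · filter_upwards [self_mem_nhdsWithin] with y hy
        rcases eq_or_lt_of_le (hy.1 : (0:ℝ) ≤ y) with h | h
        · simp [← h, hτ0]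
        · exact ((hτs y ⟨h, hy.2.trans_lt hs1.2⟩).1.1).le
      · filter_upwards [self_mem_nhdsWithin] with y hy
        rcases eq_or_lt_of_le (hy.1 : (0:ℝ) ≤ y) with h | h
        · simp [← h, hτ0]
        · exact ((hτs y ⟨h, hy.2.trans_lt hs1.2⟩).1.2).le
    · exact ((hτd x ⟨h0, hx.2.trans_lt hs1.2⟩).continuousAt).continuousWithinAt
  have hg'τcont : ∀ s1 ∈ Set.Ioo 0 δ,
      ContinuousOn (fun s => deriv g (ginv (g s / 2))) (Set.Icc 0 s1) :=
    fun s1 hs1 => hg'c.comp_continuousOn (hτcont s1 hs1)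
  have hDcont : ∀ s1 ∈ Set.Ioo 0 δ, ContinuousOn D (Set.Icc 0 s1) := by
    intro s1 hs1
    simp only [hDdef]
    exact (continuousOn_const.mul (hg'τcont s1 hs1)).sub hg'c.continuousOn
  have hg'τpos' : ∀ s1 ∈ Set.Ioo 0 δ, ∀ x ∈ Set.Icc 0 s1, 0 < deriv g (ginv (g x / 2)) := by
    intro s1 hs1 x hx
    rcases eq_or_lt_of_le hx.1 with h0 | h0
    · obtain rfl : (0:ℝ) = x := h0
      rw [hτ0, hg0']; norm_num
    · exact hg'τpos x ⟨h0, hx.2.trans_lt hs1.2⟩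
  have hMcont : ∀ s1 ∈ Set.Ioo 0 δ, ContinuousOn M (Set.Icc 0 s1) := by
    intro s1 hs1
    simp only [hMdef]
    exact ((continuous_const.mul hgc).continuousOn).div
      (continuousOn_const.mul (hg'τcont s1 hs1))
      (fun x hx => ne_of_gt (mul_pos two_pos (hg'τpos' s1 hs1 x hx)))
  -- positivity of D via Grönwall
  have hDpos : ∀ s ∈ Set.Ioo 0 δ, 0 < D s := by
    by_contra hcon
    push_neg at hcon
    obtain ⟨s1, hs1, hs1le⟩ := hcon
    have hsub : Set.Icc (D s1) (D 0) ⊆ D '' Set.Icc 0 s1 :=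
      intermediate_value_Icc' hs1.1.le (hDcont s1 hs1)
    obtain ⟨s0, hs0mem, hDs0⟩ := hsub ⟨hs1le, by rw [hD0]; norm_num⟩
    have hs0pos : 0 < s0 := by
      rcases eq_or_lt_of_le hs0mem.1 with h | h
      · exfalso; rw [← h, hD0] at hDs0; norm_num at hDs0
      · exact h
    obtain ⟨C, hC⟩ := (isCompact_Icc).exists_bound_of_continuousOn (hMcont s1 hs1)
    have key := norm_le_gronwallBound_of_norm_deriv_right_le
      (f := fun x => D (s0 - x)) (f' := fun x => (M (s0 - x) * D (s0 - x)) * (-1))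
      (δ := 0) (K := max C 0) (ε := 0) (a := 0) (b := s0)
      ?_ ?_ ?_ ?_ s0 ⟨hs0pos.le, le_refl s0⟩
    · rw [gronwallBound_ε0] at key
      simp only [sub_self, hD0] at key
      norm_num at key
    · apply (hDcont s1 hs1).comp (Continuous.continuousOn (continuous_const.sub continuous_id))
      intro x hx
      simp only [Set.mem_Icc, id, Pi.sub_apply] at hx ⊢
      exact ⟨by linarith [hx.2], by linarith [hx.1, hs0mem.2]⟩
    · intro x hx
      have hu : s0 - x ∈ Set.Ioo 0 δ :=
        ⟨by linarith [hx.2], by linarith [hx.1, hs0mem.2, hs1.2]⟩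
      have h1 : HasDerivAt (fun x : ℝ => s0 - x) (-1) x := by
        simpa using (hasDerivAt_const x s0).fun_sub (hasDerivAt_id x)
      exact ((hDd _ hu).comp x h1).hasDerivWithinAt
    · simp only [sub_zero, hDs0, norm_zero, le_refl]
    · intro x hx
      have huI : s0 - x ∈ Set.Icc 0 s1 := ⟨by linarith [hx.2], by linarith [hx.1, hs0mem.2]⟩
      have h1 : ‖M (s0 - x)‖ ≤ max C 0 := le_trans (hC _ huI) (le_max_left C 0)
      calc ‖M (s0 - x) * D (s0 - x) * (-1)‖ = ‖M (s0 - x)‖ * ‖D (s0 - x)‖ := by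
            simp [abs_mul]
        _ ≤ max C 0 * ‖D (s0 - x)‖ := mul_le_mul_of_nonneg_right h1 (norm_nonneg _)
        _ = max C 0 * ‖(fun x => D (s0 - x)) x‖ + 0 := by ring
  -- derivative of G
  have hGd : ∀ x : ℝ, HasDerivAt G (g x) x := by
    intro x
    have hGeq : G = fun t => ∫ s in (0:ℝ)..t, g s := funext hG
    rw [hGeq]
    exact intervalIntegral.integral_hasDerivAt_right (hgc.intervalIntegrable 0 x)
      (hgc.stronglyMeasurableAtFilter MeasureTheory.volume (𝓝 x)) hgc.continuousAt
  -- derivative of F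
  have hFd : ∀ s ∈ Set.Ioo 0 δ, HasDerivAt (fun a => G a - 2 * G (ginv (g a / 2)))
      (g s - 2 * (g (ginv (g s / 2)) * ((deriv g (ginv (g s / 2)))⁻¹ * (deriv g s / 2)))) s := by
    intro s hs
    exact (hGd s).sub (((hGd _).comp s (hτd s hs)).const_mul 2)
  -- conclude
  apply monotoneOn_of_deriv_nonneg (convex_Ioo 0 δ)
  · intro x hx
    exact ((hFd x hx).continuousAt).continuousWithinAt
  · rw [interior_Ioo]
    intro x hx
    exact ((hFd x hx).differentiableAt).differentiableWithinAt
  · rw [interior_Ioo]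
    intro x hx
    rw [(hFd x hx).deriv]
    have hτval := (hτs x hx).2
    have hg'τ : 0 < deriv g (ginv (g x / 2)) := hg'τpos x hx
    have hDx := hDpos x hx
    have hgx := hgpos x hx
    rw [hτval]
    have heq : g x - 2 * (g x / 2 * ((deriv g (ginv (g x / 2)))⁻¹ * (deriv g x / 2)))
        = g x * D x / (2 * deriv g (ginv (g x / 2))) := by
      simp only [hDdef]
      field_simp
    rw [heq]
    exact div_nonneg (mul_nonneg hgx.le hDx.le) (by linarith)
end

section
/- As a → 0⁺, G(a) = (a²/2)(1 + o(1)) and G(a) - 2G(g^{-1}(g(a)/2)) = (a²/4)(1 + o(1)). -/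
open Filter

/-- As `a → 0⁺`, `G a = (a²/2)(1 + o(1))` and
`G a - 2·G (g⁻¹(g(a)/2)) = (a²/4)(1 + o(1))`, where `g` is the Green's function
kernel of `P(D) = D² + pD + q` (with `g 0 = 0`, `g' 0 = 1`, strictly increasing on
`[0,δ)` with inverse `ginv`) and `G` is the antiderivative of `g` with `G 0 = 0`.
These asymptotics are independent of `p` and `q`. -/
theorem stmt_8 (p q δ : ℝ) (g G ginv : ℝ → ℝ)
    (hg2 : ContDiff ℝ 2 g) (hode : ∀ t, deriv (deriv g) t = p * deriv g t - q * g t)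
    (hg0 : g 0 = 0) (hg0' : deriv g 0 = 1)
    (hδ : 0 < δ) (hmono : StrictMonoOn g (Set.Ico 0 δ))
    (hG : ∀ t, G t = ∫ s in (0 : ℝ)..t, g s)
    (hginv : ∀ t ∈ Set.Ico 0 δ, ginv (g t) = t)
    (hhalf : ∀ a ∈ Set.Ioo 0 δ, ∃ t ∈ Set.Ioo 0 a, g t = g a / 2) :
    Tendsto (fun a => G a / (a ^ 2 / 2)) (nhdsWithin 0 (Set.Ioi 0)) (nhds 1) ∧
    Tendsto (fun a => (G a - 2 * G (ginv (g a / 2))) / (a ^ 2 / 4))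
      (nhdsWithin 0 (Set.Ioi 0)) (nhds 1) := by
  have hgc : Continuous g := hg2.continuous
  have hgd : Differentiable ℝ g := hg2.differentiable (by norm_num)
  have hder : HasDerivAt g 1 0 := by
    simpa [hg0'] using (hgd 0).hasDerivAt
  -- g a / a → 1 on 0⁺
  have L1 : Tendsto (fun a => g a / a) (nhdsWithin 0 (Set.Ioi 0)) (nhds 1) := by
    have h := hasDerivAt_iff_tendsto_slope.mp hder
    have h2 : Tendsto (slope g 0) (nhdsWithin 0 (Set.Ioi 0)) (nhds 1) :=
      h.mono_left (nhdsWithin_mono 0 (fun x hx => ne_of_gt hx))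
    refine h2.congr (fun x => ?_)
    simp [slope_def_field, hg0, div_eq_mul_inv, mul_comm]
  -- G has derivative g
  have HGd : ∀ x : ℝ, HasDerivAt G (g x) x := by
    intro x
    have h := intervalIntegral.integral_hasDerivAt_right
      (hgc.intervalIntegrable 0 x)
      (hgc.aestronglyMeasurable.stronglyMeasurableAtFilter)
      hgc.continuousAt
    exact h.congr_of_eventuallyEq (Eventually.of_forall (fun t => hG t))
  have hG0 : G 0 = 0 := by simp [hG 0]
  have hGc : Continuous G :=
    Differentiable.continuous (fun x => (HGd x).differentiableAt)
  -- first limit via L'Hôpital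
  have LG : Tendsto (fun a => G a / (a ^ 2 / 2)) (nhdsWithin 0 (Set.Ioi 0)) (nhds 1) := by
    apply HasDerivAt.lhopital_zero_right_on_Ioo (f' := g) (g' := fun x => x)
      (b := δ) hδ
    · exact fun x _ => HGd x
    · intro x _
      have : HasDerivAt (fun y : ℝ => y ^ 2 / 2) (x) x := by
        simpa using ((hasDerivAt_pow 2 x).div_const 2)
      exact this
    · exact fun x hx => ne_of_gt hx.1
    · have : Tendsto G (nhds 0) (nhds (G 0)) := hGc.continuousAt
      rw [hG0] at this
      exact this.mono_left nhdsWithin_le_nhds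
    · have : Tendsto (fun a : ℝ => a ^ 2 / 2) (nhds 0) (nhds ((0:ℝ) ^ 2 / 2)) := by
        exact (continuous_pow 2).div_const 2 |>.continuousAt
      norm_num at this
      exact this.mono_left nhdsWithin_le_nhds
    · exact L1
  refine ⟨LG, ?_⟩
  -- properties of b a = ginv (g a / 2)
  set b : ℝ → ℝ := fun a => ginv (g a / 2) with hb
  have hbprop : ∀ a ∈ Set.Ioo 0 δ, 0 < b a ∧ b a < a ∧ g (b a) = g a / 2 := by
    intro a ha
    obtain ⟨t, ht, hgt⟩ := hhalf a ha
    have htIco : t ∈ Set.Ico 0 δ := ⟨le_of_lt ht.1, lt_trans ht.2 ha.2⟩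
    have : b a = t := by rw [hb]; simp only [← hgt]; exact hginv t htIco
    exact ⟨by rw [this]; exact ht.1, by rw [this]; exact ht.2, by rw [this]; exact hgt⟩
  have hev : ∀ᶠ a in nhdsWithin 0 (Set.Ioi 0), a ∈ Set.Ioo 0 δ := by
    filter_upwards [Ioo_mem_nhdsGT_of_mem (Set.left_mem_Ico.mpr hδ)] with a ha
    exact ha
  -- b tends to 0 within Ioi 0
  have hbt : Tendsto b (nhdsWithin 0 (Set.Ioi 0)) (nhdsWithin 0 (Set.Ioi 0)) := by
    rw [tendsto_nhdsWithin_iff]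
    constructor
    · apply tendsto_of_tendsto_of_tendsto_of_le_of_le' tendsto_const_nhds
        (tendsto_nhdsWithin_iff.mp tendsto_id).1
      · filter_upwards [hev] with a ha using le_of_lt (hbprop a ha).1
      · filter_upwards [hev] with a ha using le_of_lt (hbprop a ha).2.1
    · filter_upwards [hev] with a ha using (hbprop a ha).1
  -- g a positive
  have hgpos : ∀ a ∈ Set.Ioo 0 δ, 0 < g a := by
    intro a ha
    have := hmono (Set.left_mem_Ico.mpr hδ) ⟨le_of_lt ha.1, ha.2⟩ ha.1
    rwa [hg0] at this
  -- b a / a → 1/2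
  have Lba : Tendsto (fun a => b a / a) (nhdsWithin 0 (Set.Ioi 0)) (nhds (1/2)) := by
    have h1 : Tendsto (fun a => (g (b a) / b a)⁻¹ * (g a / a) / 2)
        (nhdsWithin 0 (Set.Ioi 0)) (nhds (1/2)) := by
      have hcomp : Tendsto (fun a => g (b a) / b a) (nhdsWithin 0 (Set.Ioi 0)) (nhds 1) :=
        L1.comp hbt
      have := ((hcomp.inv₀ one_ne_zero).mul L1).div_const 2
      norm_num at this
      convert this using 2
      norm_num
    refine h1.congr' ?_
    filter_upwards [hev] with a ha
    obtain ⟨hb0, hba, hgb⟩ := hbprop a ha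
    have hga := hgpos a ha
    have hgb0 : g (b a) ≠ 0 := by rw [hgb]; positivity
    field_simp [hgb]
    rw [hgb]
    ring
  -- main eventual equality
  have heq : (fun a => (G a - 2 * G (ginv (g a / 2))) / (a ^ 2 / 4)) =ᶠ[nhdsWithin 0 (Set.Ioi 0)]
      (fun a => 2 * (G a / (a ^ 2 / 2)) - (G (b a) / ((b a) ^ 2 / 2)) * (2 * (b a / a)) ^ 2) := by
    filter_upwards [hev] with a ha
    obtain ⟨hb0, hba, hgb⟩ := hbprop a ha
    have ha0 : a ≠ 0 := ne_of_gt ha.1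
    have hb0' : b a ≠ 0 := ne_of_gt hb0
    show (G a - 2 * G (b a)) / (a ^ 2 / 4) = _
    field_simp
    ring
  refine Tendsto.congr' heq.symm ?_
  have hcompG : Tendsto (fun a => G (b a) / ((b a) ^ 2 / 2)) (nhdsWithin 0 (Set.Ioi 0)) (nhds 1) :=
    LG.comp hbt
  have hsq : Tendsto (fun a => (2 * (b a / a)) ^ 2) (nhdsWithin 0 (Set.Ioi 0)) (nhds 1) := by
    have := (Lba.const_mul 2).pow 2
    norm_num at this
    exact this
  have hfin := (LG.const_mul (2:ℝ)).sub (hcompG.mul hsq)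
  norm_num at hfin
  exact hfin
end

section
/- Let {g'(τ), g(τ)} be a Chebyshev system on [0,a] with g strictly increasing, g(0)=0. Then the unique t₀ ∈ (0,a) with ∫₀ᵃ sign(τ - t₀)·g'(τ) dτ = 0 is given by t₀ = g^{-1}(g(a)/2), and for the best L¹-approximation of g from span{g'}, one has min_{c∈ℝ} ‖g - c·g'‖_{L¹[0,a]} = ∫₀ᵃ g(τ)·sign(τ - t₀) dτ = G(a) - 2G(t₀), where G is the antiderivative of g with G(0)=0. -/
open MeasureTheory Set intervalIntegral Filter Topology


lemma aux_deriv_nonneg {g : ℝ → ℝ} {a p : ℝ} (hd : DifferentiableAt ℝ g p)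
    (hmono : StrictMonoOn g (Set.Icc 0 a)) (h0 : 0 < a) (hp : p ∈ Set.Icc 0 a) :
    0 ≤ deriv g p := by
  have h := hd.hasDerivAt
  rw [hasDerivAt_iff_tendsto_slope] at h
  rcases lt_or_eq_of_le hp.2 with hpa | hpa
  · have h' : Tendsto (slope g p) (𝓝[>] p) (𝓝 (deriv g p)) :=
      h.mono_left (nhdsWithin_mono p fun x hx => ne_of_gt hx)
    refine ge_of_tendsto h' ?_
    filter_upwards [Ioo_mem_nhdsGT_of_mem ⟨le_refl p, hpa⟩] with x hx
    rw [slope_def_field]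
    apply div_nonneg _ (by linarith [hx.1])
    have := hmono hp ⟨le_trans hp.1 (le_of_lt hx.1), le_of_lt hx.2⟩ hx.1
    linarith
  · have h' : Tendsto (slope g p) (𝓝[<] p) (𝓝 (deriv g p)) :=
      h.mono_left (nhdsWithin_mono p fun x hx => ne_of_lt hx)
    refine ge_of_tendsto h' ?_
    have h0p : 0 < p := hpa ▸ h0
    filter_upwards [Ioo_mem_nhdsLT_of_mem ⟨h0p, le_refl p⟩] with x hx
    have hxp : x < p := hx.2
    have hgx : g x < g p := hmono ⟨le_of_lt hx.1, by linarith [hp.2]⟩ hp hxp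
    have : slope g p x = (g p - g x) / (p - x) := by
      rw [slope_def_field, ← neg_div_neg_eq]; ring_nf
    rw [this]
    apply div_nonneg <;> linarith

lemma aux_sgn_bdd (s : ℝ) : ∃ C, ∀ x : ℝ, ‖if s ≤ x then (1:ℝ) else -1‖ ≤ C :=
  ⟨1, fun x => by split <;> simp⟩

lemma aux_sgn_mul_ii (f : ℝ → ℝ) (hf : Continuous f) (s u v : ℝ) :
    IntervalIntegrable (fun τ => (if s ≤ τ then (1:ℝ) else -1) * f τ) volume u v := by
  have hm : Measurable (fun τ : ℝ => (if s ≤ τ then (1:ℝ) else -1)) :=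
    Measurable.ite measurableSet_Ici measurable_const measurable_const
  exact ⟨((hf.intervalIntegrable u v).1).bdd_mul hm.aestronglyMeasurable (ae_of_all _ (aux_sgn_bdd s).choose_spec),
    ((hf.intervalIntegrable u v).2).bdd_mul hm.aestronglyMeasurable (ae_of_all _ (aux_sgn_bdd s).choose_spec)⟩

lemma aux_mul_sgn_ii (f : ℝ → ℝ) (hf : Continuous f) (s u v : ℝ) :
    IntervalIntegrable (fun τ => f τ * (if s ≤ τ then (1:ℝ) else -1)) volume u v := by
  have : (fun τ => f τ * (if s ≤ τ then (1:ℝ) else -1))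
      = fun τ => (if s ≤ τ then (1:ℝ) else -1) * f τ := by funext τ; ring
  rw [this]; exact aux_sgn_mul_ii f hf s u v

lemma aux_ae_ne (s : ℝ) : ∀ᵐ x : ℝ ∂volume, x ≠ s := by
  rw [ae_iff]; simpa using measure_singleton (s : ℝ)

lemma aux_split (f : ℝ → ℝ) (hf : Continuous f) {s a : ℝ} (h0s : 0 ≤ s) (hsa : s ≤ a) :
    (∫ τ in (0:ℝ)..a, (if s ≤ τ then (1:ℝ) else -1) * f τ)
      = (∫ τ in s..a, f τ) - ∫ τ in (0:ℝ)..s, f τ := by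
  have hsplit := intervalIntegral.integral_add_adjacent_intervals
    (aux_sgn_mul_ii f hf s 0 s) (aux_sgn_mul_ii f hf s s a)
  have h1 : (∫ τ in (0:ℝ)..s, (if s ≤ τ then (1:ℝ) else -1) * f τ)
      = ∫ τ in (0:ℝ)..s, -f τ := by
    apply intervalIntegral.integral_congr_ae
    filter_upwards [aux_ae_ne s] with x hx hx'
    rw [Set.uIoc_of_le h0s] at hx'
    rw [if_neg (not_le.2 (lt_of_le_of_ne hx'.2 hx))]
    ring
  have h2 : (∫ τ in s..a, (if s ≤ τ then (1:ℝ) else -1) * f τ) = ∫ τ in s..a, f τ := by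
    apply intervalIntegral.integral_congr
    intro x hx
    rw [Set.uIcc_of_le hsa] at hx
    simp [if_pos hx.1]
  rw [h1, h2, intervalIntegral.integral_neg] at hsplit
  linarith [hsplit]

lemma aux_split' (f : ℝ → ℝ) (hf : Continuous f) {s a : ℝ} (h0s : 0 ≤ s) (hsa : s ≤ a) :
    (∫ τ in (0:ℝ)..a, f τ * (if s ≤ τ then (1:ℝ) else -1))
      = (∫ τ in s..a, f τ) - ∫ τ in (0:ℝ)..s, f τ := by
  rw [show (fun τ => f τ * (if s ≤ τ then (1:ℝ) else -1))
      = fun τ => (if s ≤ τ then (1:ℝ) else -1) * f τ from funext fun τ => mul_comm _ _]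
  exact aux_split f hf h0s hsa


/-- Let `{g', g}` be a Chebyshev system on `[0,a]` (every nontrivial linear
combination has at most one zero in `[0,a]`) with `g` strictly increasing and
`g 0 = 0`. Then the unique `t₀ ∈ (0,a)` with `∫₀ᵃ sign(τ-t₀)·g'(τ) dτ = 0` is the
point with `g t₀ = g(a)/2`, and the best `L¹`-approximation of `g` from
`span{g'}` satisfies `min_c ‖g - c·g'‖₁ = ∫₀ᵃ g(τ)·sign(τ-t₀) dτ = G a - 2·G t₀`,
with `G` the antiderivative of `g`, `G 0 = 0`. -/
theorem stmt_9 (a t₀ : ℝ) (g G : ℝ → ℝ)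
    (ha : 0 < a) (hg1 : ContDiff ℝ 1 g)
    (hg0 : g 0 = 0) (hg0' : deriv g 0 = 1)
    (hmono : StrictMonoOn g (Set.Icc 0 a))
    (hCheb : ∀ c₁ c₂ : ℝ, ¬(c₁ = 0 ∧ c₂ = 0) →
      Set.Subsingleton {t | t ∈ Set.Icc 0 a ∧ c₁ * deriv g t + c₂ * g t = 0})
    (hG : ∀ t, G t = ∫ s in (0 : ℝ)..t, g s)
    (ht₀ : t₀ ∈ Set.Ioo 0 a) (hgt₀ : g t₀ = g a / 2) :
    (∫ τ in (0 : ℝ)..a, (if t₀ ≤ τ then (1 : ℝ) else -1) * deriv g τ) = 0 ∧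
    (∀ s ∈ Set.Ioo 0 a,
      (∫ τ in (0 : ℝ)..a, (if s ≤ τ then (1 : ℝ) else -1) * deriv g τ) = 0 → s = t₀) ∧
    IsLeast {v : ℝ | ∃ c : ℝ, v = ∫ τ in (0 : ℝ)..a, |g τ - c * deriv g τ|}
      (∫ τ in (0 : ℝ)..a, g τ * (if t₀ ≤ τ then (1 : ℝ) else -1)) ∧
    (∫ τ in (0 : ℝ)..a, g τ * (if t₀ ≤ τ then (1 : ℝ) else -1)) = G a - 2 * G t₀ := by
  have hgd : Differentiable ℝ g := hg1.differentiable one_ne_zero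
  have hgc : Continuous g := hgd.continuous
  have hf : Continuous (deriv g) := hg1.continuous_deriv le_rfl
  have ht₀Icc : t₀ ∈ Set.Icc 0 a := ⟨le_of_lt ht₀.1, le_of_lt ht₀.2⟩
  have h0Icc : (0:ℝ) ∈ Set.Icc 0 a := ⟨le_refl 0, le_of_lt ha⟩
  have haIcc : a ∈ Set.Icc 0 a := ⟨le_of_lt ha, le_refl a⟩
  have hftc : ∀ u v : ℝ, (∫ τ in u..v, deriv g τ) = g v - g u := fun u v =>
    integral_deriv_eq_sub (fun x _ => hgd x) (hf.intervalIntegrable u v)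
  have key : ∀ s, 0 ≤ s → s ≤ a →
      (∫ τ in (0:ℝ)..a, (if s ≤ τ then (1:ℝ) else -1) * deriv g τ) = g a - 2 * g s := by
    intro s h0s hsa
    rw [aux_split (deriv g) hf h0s hsa, hftc, hftc, hg0]; ring
  have part1 : (∫ τ in (0:ℝ)..a, (if t₀ ≤ τ then (1:ℝ) else -1) * deriv g τ) = 0 := by
    rw [key t₀ ht₀Icc.1 ht₀Icc.2, hgt₀]; ring
  refine ⟨part1, ?_, ?_, ?_⟩
  · intro s hs hint
    rw [key s (le_of_lt hs.1) (le_of_lt hs.2)] at hint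
    exact hmono.injOn ⟨le_of_lt hs.1, le_of_lt hs.2⟩ ht₀Icc (by rw [hgt₀]; linarith)
  · -- IsLeast
    have hVsplit := aux_split' g hgc ht₀Icc.1 ht₀Icc.2
    -- value of integral of (g - c f) * σ for all c
    have e1 : ∀ c : ℝ, (∫ τ in (0:ℝ)..a, (g τ - c * deriv g τ) * (if t₀ ≤ τ then (1:ℝ) else -1))
        = ∫ τ in (0:ℝ)..a, g τ * (if t₀ ≤ τ then (1:ℝ) else -1) := by
      intro c
      rw [show (fun τ => (g τ - c * deriv g τ) * (if t₀ ≤ τ then (1:ℝ) else -1))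
          = fun τ => g τ * (if t₀ ≤ τ then (1:ℝ) else -1)
            - c * ((if t₀ ≤ τ then (1:ℝ) else -1) * deriv g τ) from funext fun τ => by ring]
      rw [intervalIntegral.integral_sub (aux_mul_sgn_ii g hgc t₀ 0 a)
        ((aux_sgn_mul_ii (deriv g) hf t₀ 0 a).const_mul c),
        intervalIntegral.integral_const_mul, part1]
      ring
    constructor
    · -- membership
      have hgt₀pos : 0 < g t₀ := by
        have := hmono h0Icc ht₀Icc ht₀.1; rw [hg0] at this; exact this
      have hgapos : 0 < g a := by rw [hgt₀] at hgt₀pos; linarith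
      have hft₀nn : 0 ≤ deriv g t₀ := aux_deriv_nonneg (hgd t₀) hmono ha ht₀Icc
      have hft₀pos : 0 < deriv g t₀ := by
        rcases lt_or_eq_of_le hft₀nn with h | h; · exact h
        exfalso
        have hfa_ne : deriv g a ≠ 0 := by
          intro hfa
          have := hCheb 1 0 (by simp)
            ⟨ht₀Icc, by rw [← h]; ring⟩ ⟨haIcc, by rw [hfa]; ring⟩
          exact (ne_of_lt ht₀.2) this
        have hfapos : 0 < deriv g a :=
          lt_of_le_of_ne (aux_deriv_nonneg (hgd a) hmono ha haIcc) (Ne.symm hfa_ne)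
        set ε : ℝ := deriv g a / (2 * g a) with hε
        have hεpos : 0 < ε := div_pos hfapos (by linarith)
        set φ : ℝ → ℝ := fun t => deriv g t - ε * g t with hφ
        have hφc : Continuous φ := hf.sub (continuous_const.mul hgc)
        have hφ0 : 0 < φ 0 := by simp [hφ, hg0, hg0']
        have hφt₀ : φ t₀ < 0 := by
          simp only [hφ, ← h]
          have : 0 < ε * g t₀ := mul_pos hεpos hgt₀pos
          linarith
        have hφa : 0 < φ a := by
          have : ε * g a = deriv g a / 2 := by
            rw [hε, div_mul_eq_mul_div, mul_div_mul_right _ _ hgapos.ne']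
          simp only [hφ]; rw [this]; linarith
        obtain ⟨z₁, hz₁, hz₁0⟩ := intermediate_value_Icc' ht₀Icc.1 hφc.continuousOn
          (show (0:ℝ) ∈ Set.Icc (φ t₀) (φ 0) from ⟨le_of_lt hφt₀, le_of_lt hφ0⟩)
        obtain ⟨z₂, hz₂, hz₂0⟩ := intermediate_value_Icc ht₀Icc.2 hφc.continuousOn
          (show (0:ℝ) ∈ Set.Icc (φ t₀) (φ a) from ⟨le_of_lt hφt₀, le_of_lt hφa⟩)
        have hz₁t₀ : z₁ < t₀ := lt_of_le_of_ne hz₁.2 (fun hzz => by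
          rw [hzz] at hz₁0; rw [hz₁0] at hφt₀; exact lt_irrefl 0 hφt₀)
        have hz₂t₀ : t₀ < z₂ := lt_of_le_of_ne hz₂.1 (fun hzz => by
          rw [← hzz] at hz₂0; rw [hz₂0] at hφt₀; exact lt_irrefl 0 hφt₀)
        have := hCheb 1 (-ε) (by simp)
          ⟨⟨hz₁.1, le_trans hz₁.2 ht₀Icc.2⟩, by simp only [hφ] at hz₁0; linarith⟩
          ⟨⟨le_trans ht₀Icc.1 hz₂.1, hz₂.2⟩, by simp only [hφ] at hz₂0; linarith⟩
        linarith [this]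
      set c : ℝ := g t₀ / deriv g t₀ with hc
      have hcpos : 0 < c := div_pos hgt₀pos hft₀pos
      set h : ℝ → ℝ := fun t => g t - c * deriv g t with hh
      have hhc : Continuous h := hgc.sub (continuous_const.mul hf)
      have hht₀ : h t₀ = 0 := by
        simp only [hh, hc]; field_simp; ring
      have hZ : ∀ t ∈ Set.Icc 0 a, h t = 0 → t = t₀ := by
        intro t ht hht
        exact hCheb (-c) 1 (by simp)           ⟨ht, by simp only [hh] at hht; linarith⟩ ⟨ht₀Icc, by simp only [hh] at hht₀; linarith⟩
      have hh0 : h 0 < 0 := by simp only [hh]; rw [hg0, hg0']; linarith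
      have hneg : ∀ t ∈ Set.Ico 0 t₀, h t < 0 := by
        intro t ht
        by_contra hcon
        push_neg at hcon
        rcases lt_or_eq_of_le hcon with hpos | heq0
        · obtain ⟨z, hz, hz0⟩ := intermediate_value_Icc ht.1 hhc.continuousOn
            (show (0:ℝ) ∈ Set.Icc (h 0) (h t) from ⟨le_of_lt hh0, le_of_lt hpos⟩)
          have : z = t₀ := hZ z ⟨hz.1, le_trans hz.2 (le_trans (le_of_lt ht.2) ht₀Icc.2)⟩ hz0
          linarith [hz.2, ht.2, this ▸ hz.2]
        · have : t = t₀ := hZ t ⟨ht.1, le_trans (le_of_lt ht.2) ht₀Icc.2⟩ heq0.symm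
          linarith [ht.2]
      have hha : 0 < h a := by
        by_contra hcon
        push_neg at hcon
        have hhalt : h a < 0 := lt_of_le_of_ne hcon (fun hzz => by
          have := hZ a haIcc hzz; exact (ne_of_lt ht₀.2) this.symm)
        set ε : ℝ := min c ((-h a) / (1 + |deriv g a|)) / 2 with hε
        have hb : 0 < 1 + |deriv g a| := by positivity
        have hεpos : 0 < ε := by
          apply div_pos _ two_pos
          exact lt_min hcpos (div_pos (by linarith) hb)
        have hεc : ε < c := by
          have := min_le_left c ((-h a) / (1 + |deriv g a|))
          simp only [hε]; linarith
        have hεa : ε * |deriv g a| < -h a := by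
          have h1 : ε ≤ ((-h a) / (1 + |deriv g a|)) / 2 := by
            simp only [hε]; gcongr; exact min_le_right _ _
          have h2 : ε * (1 + |deriv g a|) ≤ (-h a) / 2 := by
            calc ε * (1 + |deriv g a|) ≤ ((-h a) / (1 + |deriv g a|)) / 2 * (1 + |deriv g a|) := by
                  apply mul_le_mul_of_nonneg_right h1 (le_of_lt hb)
              _ = (-h a) / 2 := by field_simp
          have h3 : ε * |deriv g a| ≤ ε * (1 + |deriv g a|) := by nlinarith [le_of_lt hεpos]
          have h4 : -h a / 2 < -h a := half_lt_self (neg_pos.mpr hhalt)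
          exact lt_of_le_of_lt (le_trans h3 h2) h4
        set φ : ℝ → ℝ := fun t => g t - (c - ε) * deriv g t with hφ
        have hφh : ∀ t, φ t = h t + ε * deriv g t := fun t => by simp only [hφ, hh]; ring
        have hφc : Continuous φ := hgc.sub (continuous_const.mul hf)
        have hφt₀ : 0 < φ t₀ := by rw [hφh, hht₀]; simpa using mul_pos hεpos hft₀pos
        have hφ0 : φ 0 < 0 := by simp only [hφ]; rw [hg0, hg0']; linarith
        have hφa : φ a < 0 := by
          rw [hφh]
          have : ε * deriv g a ≤ ε * |deriv g a| :=
            mul_le_mul_of_nonneg_left (le_abs_self _) (le_of_lt hεpos)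
          linarith
        obtain ⟨z₁, hz₁, hz₁0⟩ := intermediate_value_Icc ht₀Icc.1 hφc.continuousOn
          (show (0:ℝ) ∈ Set.Icc (φ 0) (φ t₀) from ⟨le_of_lt hφ0, le_of_lt hφt₀⟩)
        obtain ⟨z₂, hz₂, hz₂0⟩ := intermediate_value_Icc' ht₀.2.le hφc.continuousOn
          (show (0:ℝ) ∈ Set.Icc (φ a) (φ t₀) from ⟨le_of_lt hφa, le_of_lt hφt₀⟩)
        have hz₁t₀ : z₁ < t₀ := lt_of_le_of_ne hz₁.2 (fun hzz => by
          rw [hzz] at hz₁0; rw [hz₁0] at hφt₀; exact lt_irrefl 0 hφt₀)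
        have hz₂t₀ : t₀ < z₂ := lt_of_le_of_ne hz₂.1 (fun hzz => by
          rw [← hzz] at hz₂0; rw [hz₂0] at hφt₀; exact lt_irrefl 0 hφt₀)
        have := hCheb (-(c - ε)) 1 (by simp)
          ⟨⟨hz₁.1, le_trans hz₁.2 ht₀Icc.2⟩, by simp only [hφ] at hz₁0; linarith⟩
          ⟨⟨le_trans ht₀Icc.1 hz₂.1, hz₂.2⟩, by simp only [hφ] at hz₂0; linarith⟩
        linarith [this]
      have hpos : ∀ t ∈ Set.Ioc t₀ a, 0 < h t := by
        intro t ht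
        by_contra hcon
        push_neg at hcon
        rcases lt_or_eq_of_le hcon with hlt | heq0
        · obtain ⟨z, hz, hz0⟩ := intermediate_value_Icc ht.2 hhc.continuousOn
            (show (0:ℝ) ∈ Set.Icc (h t) (h a) from ⟨le_of_lt hlt, le_of_lt hha⟩)
          have : z = t₀ := hZ z ⟨le_trans (le_trans ht₀Icc.1 (le_of_lt ht.1)) hz.1, hz.2⟩ hz0
          linarith [hz.1, ht.1, this ▸ hz.1]
        · have : t = t₀ := hZ t ⟨le_trans ht₀Icc.1 (le_of_lt ht.1), ht.2⟩ heq0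
          linarith [ht.1]
      refine ⟨c, ?_⟩
      have heqon : ∀ τ ∈ Set.Icc (0:ℝ) a,
          |g τ - c * deriv g τ| = h τ * (if t₀ ≤ τ then (1:ℝ) else -1) := by
        intro τ hτ
        by_cases hcase : t₀ ≤ τ
        · rw [if_pos hcase, mul_one]
          rcases lt_or_eq_of_le hcase with h1 | h1
          · exact abs_of_pos (hpos τ ⟨h1, hτ.2⟩)
          · rw [← h1, hht₀]
            have h2 : g t₀ - c * deriv g t₀ = 0 := hht₀
            rw [h2, abs_zero]
        · rw [if_neg hcase, mul_neg_one]
          push_neg at hcase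
          exact abs_of_neg (hneg τ ⟨hτ.1, hcase⟩)
      calc (∫ τ in (0:ℝ)..a, g τ * (if t₀ ≤ τ then (1:ℝ) else -1))
          = ∫ τ in (0:ℝ)..a, (g τ - c * deriv g τ) * (if t₀ ≤ τ then (1:ℝ) else -1) :=
            (e1 c).symm
        _ = ∫ τ in (0:ℝ)..a, |g τ - c * deriv g τ| := by
            apply intervalIntegral.integral_congr
            intro x hx
            rw [Set.uIcc_of_le (le_of_lt ha)] at hx
            exact (heqon x hx).symm
    · -- lower bound
      rintro v ⟨c, rfl⟩
      rw [← e1 c]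
      apply intervalIntegral.integral_mono_on (le_of_lt ha)
        (aux_mul_sgn_ii _ (hgc.sub (continuous_const.mul hf)) t₀ 0 a)
        (((hgc.sub (continuous_const.mul hf)).abs).intervalIntegrable 0 a)
      intro x _
      split_ifs with hcase
      · rw [mul_one]; exact le_abs_self _
      · rw [mul_neg_one]; exact neg_le_abs _
  · -- final equality
    rw [aux_split' g hgc ht₀Icc.1 ht₀Icc.2]
    have hadd := intervalIntegral.integral_add_adjacent_intervals
      (hgc.intervalIntegrable (μ := volume) 0 t₀) (hgc.intervalIntegrable (μ := volume) t₀ a)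
    rw [hG, hG, ← hadd]
    ring
end

section
/- Let h̃(t) = G(a-t) - 2G(t₀ - t) for 0 ≤ t ≤ t₀, h̃(t) = G(a-t) for t₀ < t ≤ a, and h̃(t) = 0 for t > a, where t₀ = g^{-1}(g(a)/2) and 0 < a < δ. Then h̃ ∈ C¹[0,∞), h̃(a) = h̃'(a) = 0, h̃'(0) = 0, h̃(0) = G(a) - 2G(t₀), and ‖P(d/dt)h̃‖_∞ ≤ 1. -/
/-- Gluing lemma: the one-sided function `t ↦ if t ≤ c then G (c - t) else 0`
is differentiable with derivative `if t ≤ c then -g (c - t) else 0`,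
provided `G' = g`, `G 0 = 0`, `g 0 = 0`. -/
lemma glue_hasDerivAt (G g : ℝ → ℝ) (hG' : ∀ s, HasDerivAt G (g s) s)
    (hG0 : G 0 = 0) (hg0 : g 0 = 0) (c t : ℝ) :
    HasDerivAt (fun s => if s ≤ c then G (c - s) else 0)
      (if t ≤ c then -g (c - t) else 0) t := by
  have hGc : ∀ u : ℝ, HasDerivAt (fun s => G (c - s)) (-g (c - u)) u := by
    intro u
    have h1 : HasDerivAt (fun s : ℝ => c - s) (-1) u := (hasDerivAt_id u).const_sub c
    have := (hG' (c - u)).comp u h1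
    exact this.congr_deriv (by ring)
  rcases lt_trichotomy t c with hlt | heq | hgt
  · rw [if_pos hlt.le]
    apply (hGc t).congr_of_eventuallyEq
    filter_upwards [Iio_mem_nhds hlt] with s hs
    rw [if_pos (le_of_lt (Set.mem_Iio.mp hs))]
  · subst heq
    rw [if_pos le_rfl, sub_self, hg0, neg_zero]
    have h1 : HasDerivWithinAt (fun s => if s ≤ t then G (t - s) else 0) 0 (Set.Iic t) t := by
      have := (hGc t).hasDerivWithinAt (s := Set.Iic t)
      rw [sub_self, hg0, neg_zero] at this
      apply this.congr
      · intro x hx; rw [if_pos (Set.mem_Iic.mp hx)]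
      · rw [if_pos le_rfl]
    have h2 : HasDerivWithinAt (fun s => if s ≤ t then G (t - s) else 0) 0 (Set.Ici t) t := by
      have := (hasDerivAt_const t (0 : ℝ)).hasDerivWithinAt (s := Set.Ici t)
      apply this.congr
      · intro x hx
        rcases eq_or_lt_of_le (Set.mem_Ici.mp hx) with h | h
        · simp [← h, hG0]
        · simp [not_le.mpr h]
      · simp [hG0]
    have := h1.union h2
    rw [Set.Iic_union_Ici] at this
    exact hasDerivWithinAt_univ.mp this
  · rw [if_neg (not_le.mpr hgt)]
    apply (hasDerivAt_const t (0 : ℝ)).congr_of_eventuallyEq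
    filter_upwards [Ioi_mem_nhds hgt] with s hs
    rw [if_neg (not_le.mpr (Set.mem_Ioi.mp hs))]

/-- Properties of the extremal function
`h̃(t) = G(a-t) - 2G(t₀-t)` on `[0,t₀]`, `G(a-t)` on `(t₀,a]`, `0` for `t > a`,
where `g` is the Green's function kernel of `P(D) = D² + pD + q` (satisfying the
adjoint equation `g'' = p·g' - q·g`, `g 0 = 0`, `g' 0 = 1`, strictly increasing on
`[0,δ)`), `G` is its antiderivative with `G 0 = 0`, and `t₀ = g⁻¹(g(a)/2)`:
`h̃ ∈ C¹[0,∞)`, `h̃(a) = h̃'(a) = 0`, `h̃'(0) = 0`, `h̃(0) = G a - 2·G t₀`, and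
`|P(d/dt)h̃| ≤ 1` away from the break points `t₀, a`. -/
theorem stmt_11 (p q δ a t₀ : ℝ) (g G htil : ℝ → ℝ)
    (hg2 : ContDiff ℝ 2 g) (hode : ∀ t, deriv (deriv g) t = p * deriv g t - q * g t)
    (hg0 : g 0 = 0) (hg0' : deriv g 0 = 1)
    (hmono : StrictMonoOn g (Set.Ico 0 δ))
    (hG : ∀ t, G t = ∫ s in (0 : ℝ)..t, g s)
    (ha : 0 < a) (haδ : a < δ)
    (ht₀ : t₀ ∈ Set.Ioo 0 a) (hgt₀ : g t₀ = g a / 2)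
    (hh : ∀ t, htil t =
      if t ≤ t₀ then G (a - t) - 2 * G (t₀ - t)
      else if t ≤ a then G (a - t) else 0) :
    DifferentiableOn ℝ htil (Set.Ici (0 : ℝ)) ∧
    ContinuousOn (deriv htil) (Set.Ici (0 : ℝ)) ∧
    htil a = 0 ∧ deriv htil a = 0 ∧ deriv htil 0 = 0 ∧
    htil 0 = G a - 2 * G t₀ ∧
    (∀ t ∈ Set.Ici (0 : ℝ), t ≠ t₀ → t ≠ a →
      |deriv (deriv htil) t + p * deriv htil t + q * htil t| ≤ 1) := by
  have hgc : Continuous g := hg2.continuous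
  have hGfun : G = fun t => ∫ s in (0 : ℝ)..t, g s := funext hG
  have hG0 : G 0 = 0 := by rw [hG]; simp
  have hG' : ∀ s, HasDerivAt G (g s) s := by
    intro s
    rw [hGfun]
    exact (hgc.integral_hasStrictDerivAt 0 s).hasDerivAt
  -- htil as a difference of two glued functions
  have hsplit : htil = fun t =>
      (if t ≤ a then G (a - t) else 0) - 2 * (if t ≤ t₀ then G (t₀ - t) else 0) := by
    funext t
    rw [hh t]
    rcases le_or_gt t t₀ with h1 | h1
    · simp only [if_pos h1, if_pos (h1.trans ht₀.2.le)]
    · rcases le_or_gt t a with h2 | h2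
      · simp only [if_neg (not_le.mpr h1), if_pos h2]; ring
      · simp only [if_neg (not_le.mpr h1), if_neg (not_le.mpr h2)]; ring
  -- the global derivative
  set D : ℝ → ℝ := fun t =>
    (if t ≤ a then -g (a - t) else 0) - 2 * (if t ≤ t₀ then -g (t₀ - t) else 0) with hDdef
  have hder : ∀ t, HasDerivAt htil (D t) t := by
    intro t
    rw [hsplit]
    exact (glue_hasDerivAt G g hG' hG0 hg0 a t).sub
      ((glue_hasDerivAt G g hG' hG0 hg0 t₀ t).const_mul 2)
  have hderiv : deriv htil = D := funext fun t => (hder t).deriv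
  -- differentiability of g and deriv g
  have hgd : ∀ s, HasDerivAt g (deriv g s) s := fun s =>
    ((hg2.differentiable (by norm_num)) s).hasDerivAt
  have hg1 : ContDiff ℝ 1 (deriv g) := by
    have : ContDiff ℝ ((1 : ℕ) + (1 : ℕ) : ℕ) g := by exact_mod_cast hg2
    simpa using ContDiff.iterate_deriv' 1 1 this
  have hgd' : ∀ s, HasDerivAt (deriv g) (deriv (deriv g) s) s := fun s =>
    ((hg1.differentiable one_ne_zero) s).hasDerivAt
  -- the key identity: g' - p g + q G = 1
  have hkey : ∀ s, deriv g s - p * g s + q * G s = 1 := by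
    have hIder : ∀ s, HasDerivAt (fun s => deriv g s - p * g s + q * G s) 0 s := by
      intro s
      have h := ((hgd' s).sub ((hgd s).const_mul p)).add ((hG' s).const_mul q)
      have hz : deriv (deriv g) s - p * deriv g s + q * g s = 0 := by
        rw [hode s]; ring
      rw [hz] at h
      exact h
    intro s
    have hconst : (fun s => deriv g s - p * g s + q * G s) s
        = (fun s => deriv g s - p * g s + q * G s) 0 :=
      is_const_of_deriv_eq_zero (fun x => (hIder x).differentiableAt)
        (fun x => (hIder x).deriv) s 0
    simpa [hg0, hg0', hG0] using hconst
  have ht₀a : t₀ < a := ht₀.2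
  refine ⟨?_, ?_, ?_, ?_, ?_, ?_, ?_⟩
  · exact fun t _ => ((hder t).differentiableAt).differentiableWithinAt
  · -- continuity of the derivative
    rw [hderiv]
    apply Continuous.continuousOn
    apply Continuous.sub
    · apply Continuous.if_le (by fun_prop) continuous_const continuous_id continuous_const
      intro x hx; simp only [id] at hx; simp [hx, hg0]
    · apply Continuous.mul continuous_const
      apply Continuous.if_le (by fun_prop) continuous_const continuous_id continuous_const
      intro x hx; simp only [id] at hx; simp [hx, hg0]
  · rw [hh a, if_neg (not_le.mpr ht₀a), if_pos le_rfl, sub_self, hG0]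
  · rw [hderiv]
    simp only [hDdef]
    rw [if_pos le_rfl, if_neg (not_le.mpr ht₀a), sub_self, hg0]
    ring
  · rw [hderiv]
    simp only [hDdef]
    rw [if_pos ha.le, if_pos ht₀.1.le, sub_zero, sub_zero, hgt₀]
    ring
  · rw [hh 0, if_pos ht₀.1.le, sub_zero, sub_zero]
  · intro t _ htne htane
    rw [hderiv]
    rcases lt_trichotomy t t₀ with h1 | h1 | h1
    · -- t < t₀ : locally D = -g(a-·) + 2 g(t₀-·), value -1
      have hD2 : HasDerivAt D (deriv g (a - t) - 2 * deriv g (t₀ - t)) t := by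
        have hA : HasDerivAt (fun s : ℝ => -g (a - s) + 2 * g (t₀ - s))
            (deriv g (a - t) - 2 * deriv g (t₀ - t)) t := by
          have e1 : HasDerivAt (fun s : ℝ => g (a - s)) (-deriv g (a - t)) t := by
            have := (hgd (a - t)).comp t ((hasDerivAt_id t).const_sub a)
            exact this.congr_deriv (by ring)
          have e2 : HasDerivAt (fun s : ℝ => g (t₀ - s)) (-deriv g (t₀ - t)) t := by
            have := (hgd (t₀ - t)).comp t ((hasDerivAt_id t).const_sub t₀)
            exact this.congr_deriv (by ring)
          have := e1.neg.add (e2.const_mul 2)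
          exact this.congr_deriv (by ring)
        apply hA.congr_of_eventuallyEq
        filter_upwards [Iio_mem_nhds h1] with s hs
        have hs' : s ≤ t₀ := le_of_lt hs
        simp only [hDdef, if_pos hs', if_pos (hs'.trans ht₀a.le)]
        ring
      rw [hD2.deriv]
      have hDt : D t = -g (a - t) + 2 * g (t₀ - t) := by
        simp only [hDdef, if_pos h1.le, if_pos (h1.le.trans ht₀a.le)]
        ring
      have hht : htil t = G (a - t) - 2 * G (t₀ - t) := by
        rw [hh t, if_pos h1.le]
      rw [hDt, hht]
      have k1 := hkey (a - t)
      have k2 := hkey (t₀ - t)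
      have : deriv g (a - t) - 2 * deriv g (t₀ - t) + p * (-g (a - t) + 2 * g (t₀ - t))
          + q * (G (a - t) - 2 * G (t₀ - t)) = -1 := by linarith
      rw [this]
      norm_num
    · exact absurd h1 htne
    · rcases lt_trichotomy t a with h2 | h2 | h2
      · -- t₀ < t < a : locally D = -g(a-·), value 1
        have hD2 : HasDerivAt D (deriv g (a - t)) t := by
          have e1 : HasDerivAt (fun s : ℝ => -g (a - s)) (deriv g (a - t)) t := by
            have := ((hgd (a - t)).comp t ((hasDerivAt_id t).const_sub a)).neg
            exact this.congr_deriv (by ring)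
          apply e1.congr_of_eventuallyEq
          filter_upwards [Ioo_mem_nhds h1 h2] with s hs
          simp only [hDdef, if_neg (not_le.mpr hs.1), if_pos hs.2.le]
          ring
        rw [hD2.deriv]
        have hDt : D t = -g (a - t) := by
          simp only [hDdef, if_neg (not_le.mpr h1), if_pos h2.le]
          ring
        have hht : htil t = G (a - t) := by
          rw [hh t, if_neg (not_le.mpr h1), if_pos h2.le]
        rw [hDt, hht]
        have k1 := hkey (a - t)
        have : deriv g (a - t) + p * -g (a - t) + q * G (a - t) = 1 := by linarith
        rw [this]
        norm_num
      · exact absurd h2 htane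
      · -- t > a : locally D = 0
        have hD2 : HasDerivAt D 0 t := by
          apply (hasDerivAt_const t (0 : ℝ)).congr_of_eventuallyEq
          filter_upwards [Ioi_mem_nhds h2] with s hs
          simp only [hDdef, if_neg (not_le.mpr (Set.mem_Ioi.mp hs)),
            if_neg (not_le.mpr (ht₀a.trans (Set.mem_Ioi.mp hs)))]
          ring
        rw [hD2.deriv]
        have hDt : D t = 0 := by
          simp only [hDdef, if_neg (not_le.mpr h2), if_neg (not_le.mpr (ht₀a.trans h2))]
          ring
        have hht : htil t = 0 := by
          rw [hh t, if_neg (not_le.mpr (ht₀a.trans h2)), if_neg (not_le.mpr h2)]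
        rw [hDt, hht]
        norm_num
end

section
/- For P(D) = D² - β² with β > 0, let t₀ ∈ (0,a) satisfy 2·sinh(βt₀) = sinh(βa). Then the extremal function h̃(t) = (1/β²)[cosh β(a-t) - 2cosh β(t₀-t) + 1] on [0,t₀] and h̃(t) = (1/β²)[cosh β(a-t) - 1] on (t₀,a] is decreasing on [0,a]. -/
open Real Set

lemma aux_cosh_deriv (β c t : ℝ) :
    HasDerivAt (fun t => Real.cosh (β * (c - t))) (-(β * Real.sinh (β * (c - t)))) t := by
  have h1 : HasDerivAt (fun t : ℝ => β * (c - t)) (β * (-1)) t :=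
    ((hasDerivAt_id t).const_sub c).const_mul β
  have := h1.cosh
  convert this using 1
  ring

lemma aux_g1_deriv (β a t₀ t : ℝ) (hβ : β ≠ 0) :
    HasDerivAt (fun t => (Real.cosh (β * (a - t)) - 2 * Real.cosh (β * (t₀ - t)) + 1) / β ^ 2)
      ((2 * Real.sinh (β * (t₀ - t)) - Real.sinh (β * (a - t))) / β) t := by
  have h := (((aux_cosh_deriv β a t).sub ((aux_cosh_deriv β t₀ t).const_mul 2)).add_const
    1).div_const (β ^ 2)
  refine h.congr_deriv ?_
  field_simp
  ring

lemma aux_g2_deriv (β a t : ℝ) (hβ : β ≠ 0) :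
    HasDerivAt (fun t => (Real.cosh (β * (a - t)) - 1) / β ^ 2)
      (-(Real.sinh (β * (a - t)) / β)) t := by
  have h := ((aux_cosh_deriv β a t).sub_const 1).div_const (β ^ 2)
  refine h.congr_deriv ?_
  field_simp

/-- For `P(D) = D² - β²` with `β > 0` and `t₀ ∈ (0,a)` with
`2·sinh(βt₀) = sinh(βa)`, the extremal function
`h̃(t) = (1/β²)[cosh β(a-t) - 2cosh β(t₀-t) + 1]` on `[0,t₀]`,
`h̃(t) = (1/β²)[cosh β(a-t) - 1]` on `(t₀,a]`, is decreasing on `[0,a]`. -/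
theorem stmt_12 (β a t₀ : ℝ) (hβ : 0 < β) (ht₀ : t₀ ∈ Set.Ioo 0 a)
    (hsinh : 2 * Real.sinh (β * t₀) = Real.sinh (β * a))
    (htil : ℝ → ℝ)
    (hh : ∀ t, htil t =
      if t ≤ t₀ then
        (Real.cosh (β * (a - t)) - 2 * Real.cosh (β * (t₀ - t)) + 1) / β ^ 2
      else (Real.cosh (β * (a - t)) - 1) / β ^ 2) :
    AntitoneOn htil (Set.Icc 0 a) := by
  obtain ⟨ht₀0, ht₀a⟩ := ht₀
  set g₁ : ℝ → ℝ := fun t => (Real.cosh (β * (a - t)) - 2 * Real.cosh (β * (t₀ - t)) + 1) / β ^ 2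
  set g₂ : ℝ → ℝ := fun t => (Real.cosh (β * (a - t)) - 1) / β ^ 2
  have hcosh : Real.cosh (β * a) ≤ 2 * Real.cosh (β * t₀) := by
    have hs2 : Real.sinh (β * a) ^ 2 = 4 * Real.sinh (β * t₀) ^ 2 := by
      rw [← hsinh]; ring
    nlinarith [Real.cosh_sq (β * a), Real.cosh_sq (β * t₀), Real.cosh_pos (β * a),
      Real.cosh_pos (β * t₀), hs2]
  -- g₁ antitone on [0, t₀]
  have hA : AntitoneOn g₁ (Icc 0 t₀) := by
    apply antitoneOn_of_deriv_nonpos (convex_Icc 0 t₀)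
    · exact fun t _ => ((aux_g1_deriv β a t₀ t hβ.ne').continuousAt).continuousWithinAt
    · exact fun t _ => ((aux_g1_deriv β a t₀ t hβ.ne').differentiableAt).differentiableWithinAt
    · intro t ht
      rw [interior_Icc] at ht
      rw [(aux_g1_deriv β a t₀ t hβ.ne').deriv]
      apply div_nonpos_of_nonpos_of_nonneg _ hβ.le
      have hs : 0 ≤ Real.sinh (β * t) := Real.sinh_nonneg_iff.mpr (mul_nonneg hβ.le ht.1.le)
      have e1 : Real.sinh (β * (t₀ - t)) = Real.sinh (β * t₀) * Real.cosh (β * t)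
          - Real.cosh (β * t₀) * Real.sinh (β * t) := by
        rw [mul_sub, Real.sinh_sub]
      have e2 : Real.sinh (β * (a - t)) = Real.sinh (β * a) * Real.cosh (β * t)
          - Real.cosh (β * a) * Real.sinh (β * t) := by
        rw [mul_sub, Real.sinh_sub]
      have e3 : Real.sinh (β * a) * Real.cosh (β * t) =
          2 * Real.sinh (β * t₀) * Real.cosh (β * t) := by rw [← hsinh]
      have p : 0 ≤ Real.sinh (β * t) * (2 * Real.cosh (β * t₀) - Real.cosh (β * a)) :=
        mul_nonneg hs (by linarith)
      nlinarith [e1, e2, e3, p]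
  -- g₂ antitone on [t₀, a]
  have hB : AntitoneOn g₂ (Icc t₀ a) := by
    apply antitoneOn_of_deriv_nonpos (convex_Icc t₀ a)
    · exact fun t _ => ((aux_g2_deriv β a t hβ.ne').continuousAt).continuousWithinAt
    · exact fun t _ => ((aux_g2_deriv β a t hβ.ne').differentiableAt).differentiableWithinAt
    · intro t ht
      rw [interior_Icc] at ht
      rw [(aux_g2_deriv β a t hβ.ne').deriv]
      have : 0 ≤ Real.sinh (β * (a - t)) := Real.sinh_nonneg_iff.mpr (by nlinarith [ht.2])
      have : 0 ≤ Real.sinh (β * (a - t)) / β := div_nonneg this hβ.le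
      linarith
  have heq1 : ∀ t ∈ Icc (0:ℝ) t₀, htil t = g₁ t := by
    intro t ht
    rw [hh t, if_pos ht.2]
  have heq2 : ∀ t ∈ Icc t₀ a, htil t = g₂ t := by
    intro t ht
    rcases eq_or_lt_of_le ht.1 with h | h
    · rw [hh t, if_pos h.ge, ← h]
      simp [g₁, g₂]
      ring
    · rw [hh t, if_neg (not_le.mpr h)]
  intro x hx y hy hxy
  rcases le_or_gt y t₀ with hy' | hy'
  · rw [heq1 x ⟨hx.1, hxy.trans hy'⟩, heq1 y ⟨hy.1, hy'⟩]
    exact hA ⟨hx.1, hxy.trans hy'⟩ ⟨hy.1, hy'⟩ hxy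
  · rcases le_or_gt x t₀ with hx' | hx'
    · rw [heq1 x ⟨hx.1, hx'⟩, heq2 y ⟨hy'.le, hy.2⟩]
      calc g₂ y ≤ g₂ t₀ := hB (left_mem_Icc.mpr ht₀a.le) ⟨hy'.le, hy.2⟩ hy'.le
        _ = g₁ t₀ := by simp [g₁, g₂]; ring
        _ ≤ g₁ x := hA ⟨hx.1, hx'⟩ (right_mem_Icc.mpr ht₀0.le) hx'
    · rw [heq2 x ⟨hx'.le, hx.2⟩, heq2 y ⟨(hx'.trans_le hxy).le, hy.2⟩]
      exact hB ⟨hx'.le, hx.2⟩ ⟨(hx'.trans_le hxy).le, hy.2⟩ hxy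
end

section
/- For P(D) = D² + β² with β > 0 and 0 < a < δ, let t₀ ∈ (0,a) satisfy 2·sin(βt₀) = sin(βa). Then the extremal function h̃(t) = (1/β²)[-cos β(a-t) + 2cos β(t₀-t) - 1] on [0,t₀] and h̃(t) = (1/β²)[1 - cos β(a-t)] on (t₀,a] is decreasing on [0,a], and β²·h̃(0) ≤ 1. -/
/-!
On `[t₀, a]`, `β² h̃ = 1 - cos β(a - t)` decreases because `β(a - t)` stays in `[0, π/2]`.
On `[0, t₀]` the derivative of `β² h̃` is `β (2 sin β(t₀ - t) - sin β(a - t))`; with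
`u = β(t₀ - t)` and `c = β(a - t₀)` it is nonpositive because
`sin (u + c) / sin u = cos c + sin c cot u` decreases in `u` and equals `2` at `u = βt₀`
by the choice of `t₀`. The two pieces agree at `t₀`.
-/

open Real Set

theorem two_sin_le_sin_add {u u₀ c : ℝ} (huu₀ : u ≤ u₀) (hu₀u : u₀ ≤ u + π)
    (hcos : 0 < cos u₀) (heq : 2 * sin u₀ = sin (u₀ + c)) : 2 * sin u ≤ sin (u + c) := by
  -- the monotonicity of `sin (u + c) / sin u`, cleared of denominators
  have key : cos u₀ * (sin (u + c) - 2 * sin u) = (2 - cos c) * sin (u₀ - u) := by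
    rw [sin_add, sin_sub]
    rw [sin_add] at heq
    linear_combination (-cos u) * heq
  have hnonneg : 0 ≤ cos u₀ * (sin (u + c) - 2 * sin u) := by
    rw [key]
    exact mul_nonneg (by linarith [cos_le_one c])
      (sin_nonneg_of_nonneg_of_le_pi (by linarith) (by linarith))
  linarith [nonneg_of_mul_nonneg_right hnonneg hcos]

section

variable {β a t₀ : ℝ}

theorem hasDerivAt_cos_mul_sub (β a t : ℝ) :
    HasDerivAt (fun t => cos (β * (a - t))) (β * sin (β * (a - t))) t := by
  have h := (((hasDerivAt_id' t).const_sub a).const_mul β).cos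
  convert h using 1
  ring

theorem antitoneOn_two_cos_sub_cos (hβ : 0 < β) (hβt₀ : β * t₀ < π / 2)
    (hsin : 2 * sin (β * t₀) = sin (β * a)) :
    AntitoneOn (fun t => -cos (β * (a - t)) + 2 * cos (β * (t₀ - t)) - 1) (Icc 0 t₀) := by
  refine antitoneOn_of_hasDerivWithinAt_nonpos (convex_Icc 0 t₀)
    (f' := fun t => -(β * sin (β * (a - t))) + 2 * (β * sin (β * (t₀ - t)))) (by fun_prop)
    (fun t _ => (((hasDerivAt_cos_mul_sub β a t).neg.add
      ((hasDerivAt_cos_mul_sub β t₀ t).const_mul 2)).sub_const 1).hasDerivWithinAt) ?_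
  intro t ht
  rw [interior_Icc] at ht
  have h := two_sin_le_sin_add (u := β * (t₀ - t)) (u₀ := β * t₀) (c := β * (a - t₀))
    (by nlinarith [ht.1]) (by nlinarith [ht.1, ht.2, pi_pos])
    (cos_pos_of_mem_Ioo ⟨by nlinarith [ht.1, ht.2, pi_pos], hβt₀⟩)
    (by rw [hsin]; ring_nf)
  rw [show β * (t₀ - t) + β * (a - t₀) = β * (a - t) by ring] at h
  nlinarith

theorem antitoneOn_one_sub_cos (hβ : 0 ≤ β) (hπ : β * (a - t₀) ≤ π) :
    AntitoneOn (fun t => 1 - cos (β * (a - t))) (Icc t₀ a) := by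
  intro x hx y hy hxy
  have h := cos_le_cos_of_nonneg_of_le_pi (x := β * (a - y)) (y := β * (a - x))
    (mul_nonneg hβ (by linarith [hy.2])) (by nlinarith [hx.1]) (by nlinarith)
  dsimp only
  linarith

end

theorem stmt_13_general (β a t₀ : ℝ) (hβ : 0 < β)
    (haδ : a < Real.pi / (2 * β)) (ht₀ : t₀ ∈ Set.Ioo 0 a)
    (hsin : 2 * Real.sin (β * t₀) = Real.sin (β * a))
    (htil : ℝ → ℝ)
    (hh : ∀ t, htil t =
      if t ≤ t₀ then
        (-Real.cos (β * (a - t)) + 2 * Real.cos (β * (t₀ - t)) - 1) / β ^ 2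
      else (1 - Real.cos (β * (a - t))) / β ^ 2) :
    AntitoneOn htil (Set.Icc 0 a) ∧ β ^ 2 * htil 0 ≤ 1 := by
  obtain ⟨ht₀, ht₀a⟩ := ht₀
  have hβa : β * a < π / 2 := by
    rw [lt_div_iff₀ (by positivity)] at haδ
    linarith
  have hdiv := monotone_div_right_of_nonneg (sq_nonneg β)
  have hleft : AntitoneOn htil (Icc 0 t₀) :=
    (hdiv.comp_antitoneOn (antitoneOn_two_cos_sub_cos hβ (by nlinarith) hsin)).congr
      fun t ht => by rw [hh, if_pos ht.2]; rfl
  have hright : AntitoneOn htil (Icc t₀ a) :=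
    (hdiv.comp_antitoneOn (antitoneOn_one_sub_cos hβ.le (by nlinarith [pi_pos]))).congr
      fun t ht => by
        rcases ht.1.eq_or_lt with rfl | h
        · rw [hh, if_pos le_rfl]
          simp only [Function.comp_apply, sub_self, mul_zero, cos_zero]
          ring
        · rw [hh, if_neg (not_le.2 h)]; rfl
  have hmono := hleft.union_right hright (isGreatest_Icc ht₀.le) (isLeast_Icc ht₀a.le)
  rw [Icc_union_Icc_eq_Icc ht₀.le ht₀a.le] at hmono
  refine ⟨hmono, ?_⟩
  rw [hh, if_pos ht₀.le, mul_div_cancel₀ _ (by positivity), sub_zero, sub_zero]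
  linarith [cos_nonneg_of_mem_Icc (x := β * a) ⟨by nlinarith [pi_pos], hβa.le⟩,
    cos_le_one (β * t₀)]

/-- For `P(D) = D² + β²` with `β > 0`, `0 < a < δ = π/(2β)` and `t₀ ∈ (0,a)` with
`2·sin(βt₀) = sin(βa)`, the extremal function
`h̃(t) = (1/β²)[-cos β(a-t) + 2cos β(t₀-t) - 1]` on `[0,t₀]`,
`h̃(t) = (1/β²)[1 - cos β(a-t)]` on `(t₀,a]`, is decreasing on `[0,a]`, and
`β²·h̃(0) ≤ 1`. -/
theorem stmt_13 (β a t₀ : ℝ) (hβ : 0 < β) (ha : 0 < a)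
    (haδ : a < Real.pi / (2 * β)) (ht₀ : t₀ ∈ Set.Ioo 0 a)
    (hsin : 2 * Real.sin (β * t₀) = Real.sin (β * a))
    (htil : ℝ → ℝ)
    (hh : ∀ t, htil t =
      if t ≤ t₀ then
        (-Real.cos (β * (a - t)) + 2 * Real.cos (β * (t₀ - t)) - 1) / β ^ 2
      else (1 - Real.cos (β * (a - t))) / β ^ 2) :
    AntitoneOn htil (Set.Icc 0 a) ∧ β ^ 2 * htil 0 ≤ 1 :=
  stmt_13_general β a t₀ hβ haδ ht₀ hsin htil hh
end
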